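/- arXiv:1901.04882 — 4 statements merged into one kernel-verified Lean document; each statement's English description precedes it below -/
import Mathlib

section
/- The risk-aware Bellman operator is a γ-contraction in the supremum norm: with T defined by (T v)(s) = inf_{u ∈ U_s} sup_{μ ∈ M(s,u)} ( ∑_{(a,k) ∈ A×S} μ(a,k)·(c(s,a) + γ·v(k)) − b_s(μ) ), one has max_{s∈S} |(T v)(s) − (T w)(s)| ≤ γ · max_{s∈S} |v(s) − w(s)| for all v, w : S → ℝ. -/
open Finset

noncomputable section

/-- The risk-aware Bellman operator:
`(T v)(s) = inf_{u ∈ U_s} sup_{μ ∈ M(s,u)} ( ∑_{(a,k)} μ(a,k)·(c(s,a) + γ·v(k)) − b_s(μ) )`. -/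
def riskBellman {A S : Type*} [Fintype A] [Fintype S]
    (γ : ℝ) (c : S × A → ℝ) {U : S → Type*}
    (M : (s : S) → U s → Set ((A × S) → ℝ))
    (b : S → ((A × S) → ℝ) → ℝ) (v : S → ℝ) (s : S) : ℝ :=
  ⨅ u : U s,
    sSup ((fun μ : (A × S) → ℝ =>
      (∑ q : A × S, μ q * (c (s, q.1) + γ * v q.2)) - b s μ) '' M s u)

/-- Pointwise estimate on the simplex. -/
lemma riskBellman_pointwise {A S : Type*} [Fintype A] [Fintype S]
    (γ : ℝ) (hγ0 : 0 ≤ γ) (c : S × A → ℝ) (v w : S → ℝ) (K : ℝ)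
    (hK : ∀ k, |v k - w k| ≤ K) (s : S) (μ : (A × S) → ℝ)
    (hμ : μ ∈ stdSimplex ℝ (A × S)) (β : ℝ) :
    ((∑ q : A × S, μ q * (c (s, q.1) + γ * v q.2)) - β)
      - ((∑ q : A × S, μ q * (c (s, q.1) + γ * w q.2)) - β) ≤ γ * K := by
  have key : ((∑ q : A × S, μ q * (c (s, q.1) + γ * v q.2)) - β)
      - ((∑ q : A × S, μ q * (c (s, q.1) + γ * w q.2)) - β)
      = ∑ q : A × S, μ q * (γ * (v q.2 - w q.2)) := by
    rw [sub_sub_sub_cancel_right, ← Finset.sum_sub_distrib]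
    exact Finset.sum_congr rfl fun q _ => by ring
  rw [key]
  calc ∑ q : A × S, μ q * (γ * (v q.2 - w q.2))
      ≤ ∑ q : A × S, μ q * (γ * K) := by
        refine Finset.sum_le_sum fun q _ => ?_
        refine mul_le_mul_of_nonneg_left ?_ (hμ.1 q)
        refine mul_le_mul_of_nonneg_left ?_ hγ0
        exact (le_abs_self _).trans (hK q.2)
    _ = γ * K := by
        rw [← Finset.sum_mul, hμ.2, one_mul]

/-- One-sided inequality between the two sup values. -/
lemma riskBellman_sup_le {A S : Type*} [Fintype A] [Fintype S]
    (γ : ℝ) (hγ0 : 0 ≤ γ) (c : S × A → ℝ) {U : S → Type*}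
    (M : (s : S) → U s → Set ((A × S) → ℝ))
    (hMne : ∀ s u, (M s u).Nonempty) (hMc : ∀ s u, IsCompact (M s u))
    (hMs : ∀ s u, M s u ⊆ stdSimplex ℝ (A × S))
    (b : S → ((A × S) → ℝ) → ℝ) (hb : ∀ s, Continuous (b s))
    (v w : S → ℝ) (K : ℝ) (hK : ∀ k, |v k - w k| ≤ K) (s : S) (u : U s) :
    sSup ((fun μ : (A × S) → ℝ =>
      (∑ q : A × S, μ q * (c (s, q.1) + γ * v q.2)) - b s μ) '' M s u)
    ≤ sSup ((fun μ : (A × S) → ℝ =>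
      (∑ q : A × S, μ q * (c (s, q.1) + γ * w q.2)) - b s μ) '' M s u) + γ * K := by
  have hcont : ∀ x : S → ℝ, Continuous (fun μ : (A × S) → ℝ =>
      (∑ q : A × S, μ q * (c (s, q.1) + γ * x q.2)) - b s μ) := by
    intro x
    exact (continuous_finset_sum _ fun q _ =>
      (continuous_apply q).mul continuous_const).sub (hb s)
  have hbdd : BddAbove ((fun μ : (A × S) → ℝ =>
      (∑ q : A × S, μ q * (c (s, q.1) + γ * w q.2)) - b s μ) '' M s u) :=
    (((hMc s u).image (hcont w)).bddAbove)
  refine csSup_le ((hMne s u).image _) ?_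
  rintro x ⟨μ, hμ, rfl⟩
  dsimp only
  have h1 := riskBellman_pointwise γ hγ0 c v w K hK s μ (hMs s u hμ) (b s μ)
  have h2 : (∑ q : A × S, μ q * (c (s, q.1) + γ * w q.2)) - b s μ
      ≤ sSup ((fun μ : (A × S) → ℝ =>
        (∑ q : A × S, μ q * (c (s, q.1) + γ * w q.2)) - b s μ) '' M s u) :=
    le_csSup hbdd ⟨μ, hμ, rfl⟩
  linarith

/-- The risk-aware Bellman operator is a `γ`-contraction in the
supremum norm. -/
theorem riskBellman_contraction {A S : Type*} [Fintype A] [Nonempty A]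
    [Fintype S] [Nonempty S]
    (γ : ℝ) (hγ : γ ∈ Set.Ioo (0 : ℝ) 1) (c : S × A → ℝ)
    {U : S → Type*} [∀ s, Nonempty (U s)]
    (M : (s : S) → U s → Set ((A × S) → ℝ))
    (hMne : ∀ s u, (M s u).Nonempty) (hMc : ∀ s u, IsCompact (M s u))
    (hMs : ∀ s u, M s u ⊆ stdSimplex ℝ (A × S))
    (b : S → ((A × S) → ℝ) → ℝ) (hb : ∀ s, Continuous (b s)) :
    ∀ v w : S → ℝ,
      (⨆ s : S, |riskBellman γ c M b v s - riskBellman γ c M b w s|) ≤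
        γ * ⨆ s : S, |v s - w s| := by
  intro v w
  have hγ0 : 0 ≤ γ := le_of_lt hγ.1
  set K : ℝ := ⨆ s : S, |v s - w s| with hKdef
  have hK : ∀ k, |v k - w k| ≤ K :=
    fun k => le_ciSup (f := fun s : S => |v s - w s|)
      (Set.Finite.bddAbove (Set.finite_range _)) k
  have hK0 : 0 ≤ K := (abs_nonneg _).trans (hK (Classical.arbitrary S))
  have hγK : 0 ≤ γ * K := mul_nonneg hγ0 hK0
  refine ciSup_le fun s => ?_
  -- the two families over u
  set gv : U s → ℝ := fun u => sSup ((fun μ : (A × S) → ℝ =>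
      (∑ q : A × S, μ q * (c (s, q.1) + γ * v q.2)) - b s μ) '' M s u) with hgv
  set gw : U s → ℝ := fun u => sSup ((fun μ : (A × S) → ℝ =>
      (∑ q : A × S, μ q * (c (s, q.1) + γ * w q.2)) - b s μ) '' M s u) with hgw
  have h1 : ∀ u, gv u ≤ gw u + γ * K :=
    fun u => riskBellman_sup_le γ hγ0 c M hMne hMc hMs b hb v w K hK s u
  have h2 : ∀ u, gw u ≤ gv u + γ * K :=
    fun u => by
      have := riskBellman_sup_le γ hγ0 c M hMne hMc hMs b hb w v K
        (fun k => by rw [abs_sub_comm]; exact hK k) s u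
      exact this
  have hTv : riskBellman γ c M b v s = ⨅ u : U s, gv u := rfl
  have hTw : riskBellman γ c M b w s = ⨅ u : U s, gw u := rfl
  rw [hTv, hTw]
  by_cases hbd : BddBelow (Set.range gv)
  · have hbdw : BddBelow (Set.range gw) := by
      obtain ⟨m, hm⟩ := hbd
      refine ⟨m - γ * K, ?_⟩
      rintro x ⟨u, rfl⟩
      have := hm ⟨u, rfl⟩
      have := h2 u
      have h3 := h1 u
      linarith
    rw [abs_sub_le_iff]
    constructor
    · rw [sub_le_iff_le_add]
      have : ∀ u, (⨅ u, gv u) - γ * K ≤ gw u := fun u => by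
        have := ciInf_le hbd u
        have := h1 u
        linarith
      linarith [le_ciInf this]
    · rw [sub_le_iff_le_add]
      have : ∀ u, (⨅ u, gw u) - γ * K ≤ gv u := fun u => by
        have := ciInf_le hbdw u
        have := h2 u
        linarith
      linarith [le_ciInf this]
  · have hbdw : ¬ BddBelow (Set.range gw) := by
      intro ⟨m, hm⟩
      refine hbd ⟨m - γ * K, ?_⟩
      rintro x ⟨u, rfl⟩
      have := hm ⟨u, rfl⟩
      have := h2 u
      linarith
    rw [Real.iInf_of_not_bddBelow hbd, Real.iInf_of_not_bddBelow hbdw]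
    simpa using hγK
end
end

section
/- The risk-aware Bellman operator has a unique fixed point: with T defined by (T v)(s) = inf_{u ∈ U_s} sup_{μ ∈ M(s,u)} ( ∑_{(a,k) ∈ A×S} μ(a,k)·(c(s,a) + γ·v(k)) − b_s(μ) ), there exists a unique function v : S → ℝ such that v(s) = (T v)(s) for every s ∈ S. -/
/-!
For `0 ≤ γ < 1` the operator is a `γ`-contraction of `S → ℝ` in the sup metric, so Banach's
fixed point theorem applies. Changing `v` moves every payoff
`μ ↦ ∑ μ(a,k)(c(s,a) + γ v(k)) - b_s(μ)` with `μ` in the simplex by at most `γ ‖v - w‖`, and both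
`sup_μ` and `inf_u` are `1`-Lipschitz for the sup metric. Continuity of `b_s` on the compact
simplex keeps all the suprema and infima finite.
-/

open Finset

noncomputable section

section SupInf

variable {α ι : Type*} {r : ℝ}

lemma csSup_image_le_csSup_image_add {K : Set α} {g h : α → ℝ} (hh : BddAbove (h '' K))
    (hr : 0 ≤ r) (hgh : ∀ x ∈ K, g x ≤ h x + r) :
    sSup (g '' K) ≤ sSup (h '' K) + r := by
  rcases K.eq_empty_or_nonempty with rfl | hK
  · simpa using hr
  refine csSup_le (hK.image g) ?_
  rintro _ ⟨x, hx, rfl⟩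
  exact (hgh x hx).trans (add_le_add_left (le_csSup hh (Set.mem_image_of_mem h hx)) r)

lemma abs_csSup_image_sub_le {K : Set α} {g h : α → ℝ} (hg : BddAbove (g '' K))
    (hh : BddAbove (h '' K)) (hr : 0 ≤ r) (hgh : ∀ x ∈ K, |g x - h x| ≤ r) :
    |sSup (g '' K) - sSup (h '' K)| ≤ r := by
  rw [abs_sub_le_iff, sub_le_iff_le_add', sub_le_iff_le_add']
  constructor
  · exact csSup_image_le_csSup_image_add hh hr fun x hx => by
      linarith [(abs_sub_le_iff.mp (hgh x hx)).1]
  · exact csSup_image_le_csSup_image_add hg hr fun x hx => by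
      linarith [(abs_sub_le_iff.mp (hgh x hx)).2]

lemma ciInf_le_ciInf_add {g h : ι → ℝ} (hg : BddBelow (Set.range g)) (hr : 0 ≤ r)
    (hgh : ∀ i, g i ≤ h i + r) :
    ⨅ i, g i ≤ (⨅ i, h i) + r := by
  cases isEmpty_or_nonempty ι
  · simpa using hr
  rw [← sub_le_iff_le_add]
  exact le_ciInf fun i => sub_le_iff_le_add.mpr ((ciInf_le hg i).trans (hgh i))

lemma abs_ciInf_sub_ciInf_le {g h : ι → ℝ} (hg : BddBelow (Set.range g))
    (hh : BddBelow (Set.range h)) (hr : 0 ≤ r) (hgh : ∀ i, |g i - h i| ≤ r) :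
    |(⨅ i, g i) - ⨅ i, h i| ≤ r := by
  rw [abs_sub_le_iff, sub_le_iff_le_add', sub_le_iff_le_add']
  constructor
  · exact ciInf_le_ciInf_add hg hr fun i => by linarith [(abs_sub_le_iff.mp (hgh i)).1]
  · exact ciInf_le_ciInf_add hh hr fun i => by linarith [(abs_sub_le_iff.mp (hgh i)).2]

/-- An empty `K i` has `sSup (K i) = 0`, hence the `min L 0`. -/
lemma bddBelow_range_csSup_of_subset {K : ι → Set ℝ} {B : Set ℝ} (hBa : BddAbove B)
    (hBb : BddBelow B) (hK : ∀ i, K i ⊆ B) :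
    BddBelow (Set.range fun i => sSup (K i)) := by
  obtain ⟨L, hL⟩ := hBb
  refine ⟨min L 0, ?_⟩
  rintro _ ⟨i, rfl⟩
  rcases (K i).eq_empty_or_nonempty with hKi | ⟨x, hx⟩
  · simp [hKi]
  exact (min_le_left L 0).trans ((hL (hK i hx)).trans (le_csSup (hBa.mono (hK i)) hx))

end SupInf

lemma abs_sum_mul_le_of_mem_stdSimplex {ι : Type*} [Fintype ι] {μ a : ι → ℝ}
    (hμ : μ ∈ stdSimplex ℝ ι) {r : ℝ} (ha : ∀ i, |a i| ≤ r) :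
    |∑ i, μ i * a i| ≤ r :=
  calc |∑ i, μ i * a i| ≤ ∑ i, μ i * |a i| := by
        refine (abs_sum_le_sum_abs _ _).trans_eq (sum_congr rfl fun i _ => ?_)
        rw [abs_mul, abs_of_nonneg (hμ.1 i)]
    _ ≤ ∑ i, μ i * r := sum_le_sum fun i _ => mul_le_mul_of_nonneg_left (ha i) (hμ.1 i)
    _ = r := by rw [← sum_mul, hμ.2, one_mul]

namespace RiskBellman

variable {A S : Type*} [Fintype A] [Fintype S] (γ : ℝ) (c : S × A → ℝ)
  (b : S → ((A × S) → ℝ) → ℝ)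

def payoff (v : S → ℝ) (s : S) (μ : (A × S) → ℝ) : ℝ :=
  (∑ q : A × S, μ q * (c (s, q.1) + γ * v q.2)) - b s μ

lemma riskBellman_eq_iInf_sSup_payoff {U : S → Type*} (M : (s : S) → U s → Set ((A × S) → ℝ))
    (v : S → ℝ) (s : S) :
    riskBellman γ c M b v s = ⨅ u : U s, sSup (payoff γ c b v s '' M s u) :=
  rfl

variable {γ c b}

lemma continuous_payoff {s : S} (hb : Continuous (b s)) (v : S → ℝ) :
    Continuous (payoff γ c b v s) :=
  (continuous_finsetSum _ fun q _ => (continuous_apply q).mul continuous_const).sub hb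

lemma isCompact_payoff_image_stdSimplex {s : S} (hb : Continuous (b s)) (v : S → ℝ) :
    IsCompact (payoff γ c b v s '' stdSimplex ℝ (A × S)) :=
  (isCompact_stdSimplex ℝ (A × S)).image (continuous_payoff hb v)

lemma abs_payoff_sub_payoff_le (hγ : 0 ≤ γ) (v w : S → ℝ) (s : S) {μ : (A × S) → ℝ}
    (hμ : μ ∈ stdSimplex ℝ (A × S)) :
    |payoff γ c b v s μ - payoff γ c b w s μ| ≤ γ * dist v w := by
  have hdiff : payoff γ c b v s μ - payoff γ c b w s μ =
      ∑ q : A × S, μ q * (γ * (v q.2 - w q.2)) := by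
    simp only [payoff, sub_sub_sub_cancel_right, ← sum_sub_distrib]
    exact sum_congr rfl fun q _ => by ring
  rw [hdiff]
  refine abs_sum_mul_le_of_mem_stdSimplex hμ fun q => ?_
  rw [abs_mul, abs_of_nonneg hγ, ← Real.dist_eq]
  exact mul_le_mul_of_nonneg_left (dist_le_pi_dist v w q.2) hγ

lemma dist_riskBellman_le {U : S → Type*} {M : (s : S) → U s → Set ((A × S) → ℝ)}
    (hMs : ∀ s u, M s u ⊆ stdSimplex ℝ (A × S)) (hb : ∀ s, Continuous (b s)) (hγ : 0 ≤ γ)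
    (v w : S → ℝ) :
    dist (riskBellman γ c M b v) (riskBellman γ c M b w) ≤ γ * dist v w := by
  refine (dist_pi_le_iff (mul_nonneg hγ dist_nonneg)).mpr fun s => ?_
  have hK := fun v : S → ℝ => isCompact_payoff_image_stdSimplex (γ := γ) (c := c) (hb s) v
  have hbdd : ∀ v : S → ℝ, ∀ u, BddAbove (payoff γ c b v s '' M s u) := fun v u =>
    (hK v).bddAbove.mono (Set.image_mono (hMs s u))
  have hbddBelow : ∀ v : S → ℝ, BddBelow (Set.range fun u => sSup (payoff γ c b v s '' M s u)) :=
    fun v => bddBelow_range_csSup_of_subset (hK v).bddAbove (hK v).bddBelow fun u =>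
      Set.image_mono (hMs s u)
  rw [Real.dist_eq, riskBellman_eq_iInf_sSup_payoff, riskBellman_eq_iInf_sSup_payoff]
  refine abs_ciInf_sub_ciInf_le (hbddBelow v) (hbddBelow w) (mul_nonneg hγ dist_nonneg) fun u => ?_
  exact abs_csSup_image_sub_le (hbdd v u) (hbdd w u) (mul_nonneg hγ dist_nonneg) fun μ hμ =>
    abs_payoff_sub_payoff_le hγ v w s (hMs s u hμ)

lemma contractingWith_riskBellman {U : S → Type*} {M : (s : S) → U s → Set ((A × S) → ℝ)}
    (hMs : ∀ s u, M s u ⊆ stdSimplex ℝ (A × S)) (hb : ∀ s, Continuous (b s)) (hγ₀ : 0 ≤ γ)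
    (hγ₁ : γ < 1) :
    ContractingWith γ.toNNReal (riskBellman γ c M b) := by
  refine ⟨by simpa using hγ₁, LipschitzWith.of_dist_le_mul fun v w => ?_⟩
  rw [Real.coe_toNNReal γ hγ₀]
  exact dist_riskBellman_le hMs hb hγ₀ v w

end RiskBellman

theorem riskBellman_exists_unique_fixed_point_general {A S : Type*} [Fintype A]
    [Fintype S]
    (γ : ℝ) (hγ : γ ∈ Set.Ioo (0 : ℝ) 1) (c : S × A → ℝ)
    {U : S → Type*}
    (M : (s : S) → U s → Set ((A × S) → ℝ))
    (hMs : ∀ s u, M s u ⊆ stdSimplex ℝ (A × S))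
    (b : S → ((A × S) → ℝ) → ℝ) (hb : ∀ s, Continuous (b s)) :
    ∃! v : S → ℝ, ∀ s : S, v s = riskBellman γ c M b v s := by
  have hT := RiskBellman.contractingWith_riskBellman (c := c) hMs hb hγ.1.le hγ.2
  refine ⟨hT.fixedPoint _, fun s => congrFun hT.fixedPoint_isFixedPt.symm s, fun v hv => ?_⟩
  exact hT.fixedPoint_unique (funext fun s => (hv s).symm)

/-- The risk-aware Bellman operator has a unique fixed point. -/
theorem riskBellman_exists_unique_fixed_point {A S : Type*} [Fintype A] [Nonempty A]
    [Fintype S] [Nonempty S]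
    (γ : ℝ) (hγ : γ ∈ Set.Ioo (0 : ℝ) 1) (c : S × A → ℝ)
    {U : S → Type*} [∀ s, Nonempty (U s)]
    (M : (s : S) → U s → Set ((A × S) → ℝ))
    (hMne : ∀ s u, (M s u).Nonempty) (hMc : ∀ s u, IsCompact (M s u))
    (hMs : ∀ s u, M s u ⊆ stdSimplex ℝ (A × S))
    (b : S → ((A × S) → ℝ) → ℝ) (hb : ∀ s, Continuous (b s)) :
    ∃! v : S → ℝ, ∀ s : S, v s = riskBellman γ c M b v s :=
  riskBellman_exists_unique_fixed_point_general γ hγ c M hMs b hb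
end
end

section
/- All I′-mixed points of a finite game have equal value: if x and y are both I′-mixed points of the expected cost functions (C^i)_{i∈I} for the same subset I′ ⊆ I, then C^i(x) = C^i(y) for every player i ∈ I. -/
open Finset

noncomputable section

variable {I : Type*} [Fintype I] [DecidableEq I] {A : I → Type*} [∀ i, Fintype (A i)]

/-- `x` is a mixed multi-strategy: each component lies in the simplex `Δ(A_i)`. -/
def IsMixed (x : ∀ i, A i → ℝ) : Prop :=
  ∀ i, (∀ a, 0 ≤ x i a) ∧ ∑ a, x i a = 1

/-- Expected cost of a payoff array `c` under the mixed multi-strategy `x`. -/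
def expCost (c : (∀ j, A j) → ℝ) (x : ∀ i, A i → ℝ) : ℝ :=
  ∑ a : ∀ j, A j, (∏ j, x j (a j)) * c a

/-- `x` is a Nash equilibrium of the game with cost functions `c`. -/
def IsNash (c : ∀ _ : I, (∀ j, A j) → ℝ) (x : ∀ i, A i → ℝ) : Prop :=
  IsMixed x ∧ ∀ i, ∀ u : A i → ℝ, ((∀ a, 0 ≤ u a) ∧ ∑ a, u a = 1) →
    expCost (c i) x ≤ expCost (c i) (Function.update x i u)

/-- `x` is an `I′`-mixed point of `(C^i)_{i∈I}`: it is a Nash equilibrium, every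
player in `I′` is globally optimal at `x`, and every player outside `I′` receives a
weakly lower cost whenever only the other players deviate. -/
def IsMixedPoint (c : ∀ _ : I, (∀ j, A j) → ℝ) (I' : Set I) (x : ∀ i, A i → ℝ) : Prop :=
  IsNash c x ∧
    (∀ i ∈ I', ∀ z : ∀ i, A i → ℝ, IsMixed z → expCost (c i) x ≤ expCost (c i) z) ∧
    (∀ i ∉ I', ∀ z : ∀ i, A i → ℝ, IsMixed z → z i = x i →
      expCost (c i) z ≤ expCost (c i) x)

/-- all `I′`-mixed points of a finite game have equal value for
every player. -/
theorem expCost_eq_of_isMixedPoint {I : Type*} [Fintype I] [DecidableEq I] [Nonempty I]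
    {A : I → Type*} [∀ i, Fintype (A i)] [∀ i, Nonempty (A i)]
    (c : ∀ _ : I, (∀ j, A j) → ℝ) (I' : Set I) (x y : ∀ i, A i → ℝ)
    (hx : IsMixedPoint c I' x) (hy : IsMixedPoint c I' y) :
    ∀ i, expCost (c i) x = expCost (c i) y := by
  have hupd : ∀ (w v : ∀ i, A i → ℝ) (i : I), IsMixed w → IsMixed v →
      IsMixed (Function.update w i (v i)) := by
    intro w v i hw hv j
    by_cases hji : j = i
    · subst hji; simpa using hv j
    · simpa [Function.update_of_ne hji] using hw j
  intro i
  by_cases h : i ∈ I'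
  · exact le_antisymm (hx.2.1 i h y hy.1.1) (hy.2.1 i h x hx.1.1)
  · have h1 := hx.1.2 i (y i) (hy.1.1 i)
    have h2 := hy.2.2 i h (Function.update x i (y i))
      (hupd x y i hx.1.1 hy.1.1) (by simp)
    have h3 := hy.1.2 i (x i) (hx.1.1 i)
    have h4 := hx.2.2 i h (Function.update y i (x i))
      (hupd y x i hy.1.1 hx.1.1) (by simp)
    linarith
end
end

section
/- Dual representation of CVaR on a finite probability space: let Ω be a nonempty finite set, p : Ω → ℝ with p ≥ 0 and ∑_ω p(ω) = 1, let α ∈ [0,1), and let X : Ω → ℝ. Then inf_{η ∈ ℝ} ( η + (1−α)^{-1} · ∑_{ω∈Ω} p(ω) · max{X(ω) − η, 0} ) = sup { ∑_{ω∈Ω} μ(ω)·X(ω) : μ : Ω → ℝ, μ ≥ 0, ∑_ω μ(ω) = 1, and μ(ω) ≤ p(ω)/(1−α) for all ω ∈ Ω }. -/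
/-!
Write `β = 1 - α`. Weak duality: for every `μ` in the envelope and every `η`,
`∑ μ X = η + ∑ μ (X - η) ≤ η + ∑ μ (X - η)⁺ ≤ η + β⁻¹ ∑ p (X - η)⁺`.
Strong duality: take for `η` an upper `β`-quantile of `X`, i.e. `P(X > η) ≤ β ≤ P(X ≥ η)`, and
let `μ = w p / β` with `w = 1` on `{X > η}`, `w = 0` on `{X < η}` and `w` constant on the atom
`{X = η}`, tuned so that `μ` has mass one. Then `w (X - η) = (X - η)⁺`, so both inequalities above
are equalities; the infimum is attained at `η` and the supremum at `μ`.
-/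

open Finset

theorem ciInf_eq_csSup_of_forall_le_of_mem {α ι : Type*} [ConditionallyCompleteLattice α]
    {f : ι → α} {S : Set α} (hle : ∀ s ∈ S, ∀ i, s ≤ f i) (hmem : ∃ i, f i ∈ S) :
    ⨅ i, f i = sSup S := by
  obtain ⟨i, hi⟩ := hmem
  have hleast : IsLeast (Set.range f) (f i) :=
    ⟨Set.mem_range_self i, Set.forall_mem_range.2 (hle _ hi)⟩
  have hgreatest : IsGreatest S (f i) := ⟨hi, fun s hs => hle s hs i⟩
  exact hleast.csInf_eq.trans hgreatest.csSup_eq.symm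

theorem exists_add_mul_eq_of_le_of_le {a b β : ℝ} (ha : a ≤ β) (hb : β ≤ a + b) :
    ∃ θ ∈ Set.Icc (0 : ℝ) 1, a + θ * b = β := by
  rcases (show 0 ≤ b by linarith).eq_or_lt with rfl | hb0
  · exact ⟨0, ⟨le_rfl, zero_le_one⟩, by linarith⟩
  · refine ⟨(β - a) / b, ⟨div_nonneg (by linarith) hb0.le, (div_le_one hb0).2 (by linarith)⟩, ?_⟩
    field_simp
    ring

section

variable {Ω : Type*} [Fintype Ω]

theorem exists_sum_lt_le_le_sum_le [Nonempty Ω] (p : Ω → ℝ) (hp1 : ∑ ω, p ω = 1) (X : Ω → ℝ)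
    {β : ℝ} (hβ0 : 0 ≤ β) (hβ1 : β ≤ 1) :
    ∃ η, ∑ ω ∈ univ.filter (fun ω => η < X ω), p ω ≤ β ∧
      β ≤ ∑ ω ∈ univ.filter (fun ω => η ≤ X ω), p ω := by
  set s := univ.filter (fun ω => β ≤ ∑ ω' ∈ univ.filter (fun ω' => X ω ≤ X ω'), p ω')
  have hs : s.Nonempty := by
    obtain ⟨ω, hω⟩ := Finite.exists_min X
    refine ⟨ω, mem_filter.2 ⟨mem_univ _, ?_⟩⟩
    rwa [filter_true_of_mem fun ω' _ => hω ω', hp1]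
  obtain ⟨ω₀, hω₀s, hmax⟩ := s.exists_max_image X hs
  refine ⟨X ω₀, ?_, (mem_filter.1 hω₀s).2⟩
  set A := univ.filter (fun ω => X ω₀ < X ω)
  rcases A.eq_empty_or_nonempty with hA | hA
  · rwa [hA, sum_empty]
  obtain ⟨ω₁, hω₁A, hmin⟩ := A.exists_min_image X hA
  have hω₀₁ : X ω₀ < X ω₁ := (mem_filter.1 hω₁A).2
  -- `X ω₁` is the next value of `X` above the maximiser `X ω₀`, so `ω₁ ∉ s`.
  have hA_eq : A = univ.filter (fun ω => X ω₁ ≤ X ω) := by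
    ext ω
    simp only [A, mem_filter, mem_univ, true_and]
    exact ⟨fun h => hmin ω (mem_filter.2 ⟨mem_univ _, h⟩), hω₀₁.trans_le⟩
  have hω₁s : ω₁ ∉ s := fun h => (hmax ω₁ h).not_gt hω₀₁
  simp only [s, mem_filter, mem_univ, true_and, not_le] at hω₁s
  rw [hA_eq]
  exact hω₁s.le

theorem exists_weight_mul_sub_eq_max (p X : Ω → ℝ) {η β : ℝ}
    (hlt : ∑ ω ∈ univ.filter (fun ω => η < X ω), p ω ≤ β)
    (hle : β ≤ ∑ ω ∈ univ.filter (fun ω => η ≤ X ω), p ω) :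
    ∃ w : Ω → ℝ, (∀ ω, w ω ∈ Set.Icc (0 : ℝ) 1) ∧ ∑ ω, w ω * p ω = β ∧
      ∀ ω, w ω * (X ω - η) = max (X ω - η) 0 := by
  classical
  have hsplit : ∑ ω ∈ univ.filter (fun ω => η ≤ X ω), p ω =
      ∑ ω ∈ univ.filter (fun ω => η < X ω), p ω + ∑ ω ∈ univ.filter (fun ω => X ω = η), p ω := by
    rw [← sum_union (disjoint_filter.2 fun ω _ h h' => h.ne' h')]
    congr 1
    ext ω
    simp [le_iff_lt_or_eq, eq_comm]
  obtain ⟨θ, ⟨hθ0, hθ1⟩, hθ⟩ := exists_add_mul_eq_of_le_of_le hlt (hsplit ▸ hle)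
  refine ⟨fun ω => if η < X ω then 1 else if X ω = η then θ else 0, fun ω => ?_, ?_, fun ω => ?_⟩
  · dsimp only
    split_ifs <;> simp [*]
  · rw [← hθ, sum_filter, sum_filter, mul_sum, ← sum_add_distrib]
    refine sum_congr rfl fun ω _ => ?_
    dsimp only
    split_ifs with h h' <;> first | exact absurd h' h.ne' | ring
  · rcases lt_trichotomy (X ω) η with h | h | h
    · simp [h.not_gt, h.ne, (sub_neg.2 h).le]
    · simp [h]
    · simp [h, (sub_pos.2 h).le]

def riskEnvelope (p : Ω → ℝ) (β : ℝ) : Set (Ω → ℝ) :=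
  {μ | (∀ ω, 0 ≤ μ ω) ∧ ∑ ω, μ ω = 1 ∧ ∀ ω, μ ω ≤ p ω / β}

theorem sum_mul_eq_add_sum_mul_sub {μ : Ω → ℝ} (hμ : ∑ ω, μ ω = 1) (X : Ω → ℝ) (η : ℝ) :
    ∑ ω, μ ω * X ω = η + ∑ ω, μ ω * (X ω - η) := by
  simp only [mul_sub, sum_sub_distrib, ← sum_mul, hμ]
  ring

theorem sum_mul_le_of_mem_riskEnvelope {p μ : Ω → ℝ} {β : ℝ} (hμ : μ ∈ riskEnvelope p β)
    (X : Ω → ℝ) (η : ℝ) :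
    ∑ ω, μ ω * X ω ≤ η + β⁻¹ * ∑ ω, p ω * max (X ω - η) 0 := by
  obtain ⟨hμ0, hμ1, hμp⟩ := hμ
  rw [sum_mul_eq_add_sum_mul_sub hμ1, mul_sum]
  gcongr η + ?_
  refine sum_le_sum fun ω _ => ?_
  calc μ ω * (X ω - η) ≤ μ ω * max (X ω - η) 0 :=
        mul_le_mul_of_nonneg_left (le_max_left _ _) (hμ0 ω)
    _ ≤ p ω / β * max (X ω - η) 0 := mul_le_mul_of_nonneg_right (hμp ω) (le_max_right _ _)
    _ = β⁻¹ * (p ω * max (X ω - η) 0) := by ring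

theorem exists_mem_riskEnvelope_sum_mul_eq [Nonempty Ω] {p : Ω → ℝ} (hp0 : ∀ ω, 0 ≤ p ω)
    (hp1 : ∑ ω, p ω = 1) (X : Ω → ℝ) {β : ℝ} (hβ0 : 0 < β) (hβ1 : β ≤ 1) :
    ∃ η, ∃ μ ∈ riskEnvelope p β, ∑ ω, μ ω * X ω = η + β⁻¹ * ∑ ω, p ω * max (X ω - η) 0 := by
  obtain ⟨η, hlt, hle⟩ := exists_sum_lt_le_le_sum_le p hp1 X hβ0.le hβ1
  obtain ⟨w, hw, hwp, hwX⟩ := exists_weight_mul_sub_eq_max p X hlt hle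
  have hμ1 : ∑ ω, w ω * p ω / β = 1 := by rw [← sum_div, hwp, div_self hβ0.ne']
  refine ⟨η, fun ω => w ω * p ω / β, ⟨fun ω => ?_, hμ1, fun ω => ?_⟩, ?_⟩
  · exact div_nonneg (mul_nonneg (hw ω).1 (hp0 ω)) hβ0.le
  · exact div_le_div_of_nonneg_right (mul_le_of_le_one_left (hp0 ω) (hw ω).2) hβ0.le
  · rw [sum_mul_eq_add_sum_mul_sub hμ1, mul_sum]
    congr 1
    refine sum_congr rfl fun ω _ => ?_
    rw [← hwX ω]
    ring

end

/-- Dual representation of CVaR on a finite probability space: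
the Rockafellar–Uryasev infimum equals the supremum of expectations over the
polyhedral risk envelope `{μ ∈ Δ(Ω) : μ ≤ p/(1−α)}`. -/
theorem cvar_dual_representation {Ω : Type*} [Fintype Ω] [Nonempty Ω]
    (p : Ω → ℝ) (hp0 : ∀ ω, 0 ≤ p ω) (hp1 : ∑ ω, p ω = 1)
    (α : ℝ) (hα : α ∈ Set.Ico (0 : ℝ) 1) (X : Ω → ℝ) :
    (⨅ η : ℝ, η + (1 - α)⁻¹ * ∑ ω, p ω * max (X ω - η) 0) =
      sSup {r : ℝ | ∃ μ : Ω → ℝ, (∀ ω, 0 ≤ μ ω) ∧ (∑ ω, μ ω = 1) ∧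
        (∀ ω, μ ω ≤ p ω / (1 - α)) ∧ r = ∑ ω, μ ω * X ω} := by
  apply ciInf_eq_csSup_of_forall_le_of_mem
  · rintro _ ⟨μ, hμ0, hμ1, hμp, rfl⟩ η
    exact sum_mul_le_of_mem_riskEnvelope ⟨hμ0, hμ1, hμp⟩ X η
  · obtain ⟨η, μ, ⟨hμ0, hμ1, hμp⟩, hμX⟩ :=
      exists_mem_riskEnvelope_sum_mul_eq hp0 hp1 X (sub_pos.2 hα.2) (sub_le_self 1 hα.1)
    exact ⟨η, μ, hμ0, hμ1, hμp, hμX.symm⟩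
end
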